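/- arXiv:2310.14080 — 5 statements merged into one kernel-verified Lean document; each statement's English description precedes it below -/
import Mathlib

section
/- Let C be a Type II Z4-code of length n (a self-dual submodule of (ZMod 4)^n all of whose codewords have Euclidean weight divisible by 8). Let 2u ∈ (ZMod 4)^n be an even vector (all coordinates in {0,2}) such that 2u ∉ C and the number of coordinates of 2u equal to 2 is even. Set C₀ = {v ∈ C : ⟨2u, v⟩ = 0}. Then the code C̃ = C₀ + span{2u} is again a Type II Z4-code of length n, i.e., C̃ is self-dual and every codeword of C̃ has Euclidean weight divisible by 8. -/
open Finset

def z4Inner {n : ℕ} (x y : Fin n → ZMod 4) : ZMod 4 := ∑ i, x i * y i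

def z4Dual {n : ℕ} (C : Set (Fin n → ZMod 4)) : Set (Fin n → ZMod 4) :=
  {x | ∀ c ∈ C, z4Inner x c = 0}

def IsSelfDualZ4 {n : ℕ} (C : Set (Fin n → ZMod 4)) : Prop := C = z4Dual C

def euclWt {n : ℕ} (x : Fin n → ZMod 4) : ℕ :=
  ∑ i, (if x i = 0 then 0 else if x i = 2 then 4 else 1)

def IsTypeIIZ4 {n : ℕ} (C : Set (Fin n → ZMod 4)) : Prop :=
  IsSelfDualZ4 C ∧ ∀ c ∈ C, 8 ∣ euclWt c

def IsExtremalTypeIIZ4 (n : ℕ) (C : Set (Fin n → ZMod 4)) : Prop :=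
  IsTypeIIZ4 C ∧ sInf (euclWt '' (C \ {0})) = 8 * (n / 24) + 8

def IsEvenVec {n : ℕ} (x : Fin n → ZMod 4) : Prop := ∀ i, x i = 0 ∨ x i = 2

def Sset {n : ℕ} (w : Fin n → ZMod 4) (a : ZMod 4) : Finset (Fin n) :=
  Finset.univ.filter (fun j => w j = a)

def doubled {n : ℕ} (C : Set (Fin n → ZMod 4)) (tu : Fin n → ZMod 4) :
    Set (Fin n → ZMod 4) :=
  {w | ∃ v ∈ C, z4Inner tu v = 0 ∧ ∃ a : ZMod 4, w = v + a • tu}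

def bInner {n : ℕ} (x y : Fin n → ZMod 2) : ZMod 2 := ∑ i, x i * y i

def bDual {n : ℕ} (D : Set (Fin n → ZMod 2)) : Set (Fin n → ZMod 2) :=
  {x | ∀ y ∈ D, bInner x y = 0}

def hWt {n : ℕ} (x : Fin n → ZMod 2) : ℕ := (Finset.univ.filter fun i => x i ≠ 0).card

def IsTypeIIBin {n : ℕ} (D : Set (Fin n → ZMod 2)) : Prop :=
  D = bDual D ∧ ∀ y ∈ D, 4 ∣ hWt y

def IsExtremalTypeIIBin (n : ℕ) (D : Set (Fin n → ZMod 2)) : Prop :=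
  IsTypeIIBin D ∧ sInf (hWt '' (D \ {0})) = 4 * (n / 24) + 4

def residueSet {n : ℕ} (C : Set (Fin n → ZMod 4)) : Set (Fin n → ZMod 2) :=
  {y | ∃ c ∈ C, y = fun i => ZMod.castHom (by norm_num : (2:ℕ) ∣ 4) (ZMod 2) (c i)}

def torsionSet {n : ℕ} (C : Set (Fin n → ZMod 4)) : Set (Fin n → ZMod 2) :=
  {c | (fun i => 2 * ((c i).val : ZMod 4)) ∈ C}

def rInner {n : ℕ} (x y : Fin n → ℝ) : ℝ := ∑ i, x i * y i

def A4lattice {n : ℕ} (C : Set (Fin n → ZMod 4)) : Set (Fin n → ℝ) :=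
  {x | ∃ z : Fin n → ℤ, (∀ i, 2 * x i = (z i : ℝ)) ∧ (fun i => (z i : ZMod 4)) ∈ C}

def dualLattice {n : ℕ} (L : Set (Fin n → ℝ)) : Set (Fin n → ℝ) :=
  {y | ∀ x ∈ L, ∃ m : ℤ, rInner x y = (m : ℝ)}

def IsIntegralLattice {n : ℕ} (L : Set (Fin n → ℝ)) : Prop :=
  ∀ x ∈ L, ∀ y ∈ L, ∃ m : ℤ, rInner x y = (m : ℝ)

def IsEvenLattice {n : ℕ} (L : Set (Fin n → ℝ)) : Prop :=
  IsIntegralLattice L ∧ ∀ x ∈ L, ∃ m : ℤ, rInner x x = 2 * (m : ℝ)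

def IsUnimodularLattice {n : ℕ} (L : Set (Fin n → ℝ)) : Prop :=
  IsIntegralLattice L ∧ L = dualLattice L

def MonomiallyEquiv {n : ℕ} (C D : Set (Fin n → ZMod 4)) : Prop :=
  ∃ (σ : Equiv.Perm (Fin n)) (ε : Fin n → ZMod 4), (∀ i, ε i = 1 ∨ ε i = 3) ∧
    D = (fun x => fun i => ε i * x (σ i)) '' C

/-! Since `tu` is even, `⟨tu, c⟩ ∈ {0, 2}` for every `c`, and `tu ∉ C = C^⊥` yields `v₁ ∈ C` with
`⟨tu, v₁⟩ = 2`, so `C = C₀ ∪ (v₁ + C₀)`. A vector orthogonal to `C₀` and `tu` therefore acts on `C`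
as a multiple `a ⟨tu, ·⟩`, so it lies in `a • tu + C^⊥ = a • tu + C`, and in fact in `a • tu + C₀`.

For the weights, `wt_E(a) ≡ ã² (mod 8)` for every integer lift `ã` of `a ∈ ℤ/4`, whence
`wt_E(x + y) ≡ wt_E(x) + wt_E(y) + 2⟨x, y⟩ (mod 8)`; moreover `wt_E(tu) = 4 · #{i | tuᵢ = 2}`. -/

theorem z4Inner_eq_dotProduct {n : ℕ} (x y : Fin n → ZMod 4) : z4Inner x y = x ⬝ᵥ y := rfl

theorem zmod4_eq_zero_or_eq_two_of_two_mul_eq_zero :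
    ∀ z : ZMod 4, 2 * z = 0 → z = 0 ∨ z = 2 := by
  decide

theorem euclWt_add_cast {n : ℕ} (x y : Fin n → ZMod 4) :
    (euclWt (x + y) : ZMod 8) = euclWt x + euclWt y + 2 * ((x ⬝ᵥ y).val : ZMod 8) := by
  let double : ZMod 4 →+ ZMod 8 := AddMonoidHom.mk' (fun z => 2 * (z.val : ZMod 8)) (by decide)
  have hcoord : ∀ a b : ZMod 4,
      ((if a + b = 0 then 0 else if a + b = 2 then 4 else 1 : ℕ) : ZMod 8) =
        ((if a = 0 then 0 else if a = 2 then 4 else 1 : ℕ) : ZMod 8) +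
        ((if b = 0 then 0 else if b = 2 then 4 else 1 : ℕ) : ZMod 8) + double (a * b) := by
    decide
  change _ = _ + _ + double (∑ i, x i * y i)
  simp only [euclWt, Nat.cast_sum, map_sum, ← Finset.sum_add_distrib]
  exact Finset.sum_congr rfl fun i _ => hcoord (x i) (y i)

namespace IsEvenVec

variable {n : ℕ} {x : Fin n → ZMod 4}

theorem smul_eq_zero_or_self (hx : IsEvenVec x) (a : ZMod 4) : a • x = 0 ∨ a • x = x := by
  have hcoord : ∀ b : ZMod 4, (b = 0 ∨ b = 2) → 2 * b = 0 ∧ 3 * b = b := by decide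
  obtain rfl | rfl | rfl | rfl : a = 0 ∨ a = 1 ∨ a = 2 ∨ a = 3 := by revert a; decide
  · exact Or.inl (zero_smul _ x)
  · exact Or.inr (one_smul _ x)
  · exact Or.inl (funext fun i => (hcoord _ (hx i)).1)
  · exact Or.inr (funext fun i => (hcoord _ (hx i)).2)

theorem dotProduct_self (hx : IsEvenVec x) : x ⬝ᵥ x = 0 :=
  Finset.sum_eq_zero fun i _ => by rcases hx i with h | h <;> rw [h] <;> decide

theorem dotProduct_eq_zero_or_eq_two (hx : IsEvenVec x) (y : Fin n → ZMod 4) :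
    x ⬝ᵥ y = 0 ∨ x ⬝ᵥ y = 2 := by
  refine zmod4_eq_zero_or_eq_two_of_two_mul_eq_zero _ ?_
  rw [dotProduct, Finset.mul_sum]
  exact Finset.sum_eq_zero fun i _ => by
    rcases hx i with h | h <;> rw [h, ← mul_assoc] <;> simp [show (2 : ZMod 4) * 2 = 0 from rfl]

theorem euclWt_eq (hx : IsEvenVec x) : euclWt x = 4 * (Sset x 2).card := by
  rw [Sset, Finset.card_filter, Finset.mul_sum]
  exact Finset.sum_congr rfl fun i _ => by rcases hx i with h | h <;> simp [h] <;> decide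

end IsEvenVec

section Doubled

variable {n : ℕ} {tu : Fin n → ZMod 4}

theorem doubled_subset_z4Dual {C : Set (Fin n → ZMod 4)} (hC : C ⊆ z4Dual C)
    (htt : tu ⬝ᵥ tu = 0) : doubled C tu ⊆ z4Dual (doubled C tu) := by
  rintro _ ⟨v, hv, hv0, a, rfl⟩ _ ⟨w, hw, hw0, b, rfl⟩
  have hvw : v ⬝ᵥ w = 0 := hC hv w hw
  rw [z4Inner_eq_dotProduct] at hv0 hw0 ⊢
  simp only [add_dotProduct, dotProduct_add, smul_dotProduct, dotProduct_smul, smul_eq_mul,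
    dotProduct_comm v tu, hvw, hv0, hw0, htt, mul_zero, add_zero]

variable {C : Submodule (ZMod 4) (Fin n → ZMod 4)}

theorem exists_mem_dotProduct_eq_two (hsd : (C : Set (Fin n → ZMod 4)) = z4Dual C)
    (hev : IsEvenVec tu) (htu : tu ∉ C) : ∃ v ∈ C, tu ⬝ᵥ v = 2 := by
  by_contra! h
  refine htu (hsd ▸ fun c hc => ?_ : tu ∈ (C : Set (Fin n → ZMod 4)))
  exact (hev.dotProduct_eq_zero_or_eq_two c).resolve_right (h c hc)

theorem z4Dual_doubled_subset (hsd : (C : Set (Fin n → ZMod 4)) = z4Dual C)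
    (hev : IsEvenVec tu) (htu : tu ∉ C) : z4Dual (doubled C tu) ⊆ doubled C tu := by
  intro x hx
  have hx0 : ∀ c ∈ C, tu ⬝ᵥ c = 0 → x ⬝ᵥ c = 0 := fun c hc h => hx c ⟨c, hc, h, 0, by simp⟩
  obtain ⟨v₁, hv₁, htv₁⟩ := exists_mem_dotProduct_eq_two hsd hev htu
  obtain ⟨a, ha⟩ : ∃ a : ZMod 4, x ⬝ᵥ v₁ = a * 2 := by
    have h2v₁ := hx0 _ (C.smul_mem 2 hv₁) (by rw [dotProduct_smul, htv₁]; decide)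
    rw [dotProduct_smul, smul_eq_mul] at h2v₁
    rcases zmod4_eq_zero_or_eq_two_of_two_mul_eq_zero _ h2v₁ with h | h
    exacts [⟨0, by rw [h]; decide⟩, ⟨1, by rw [h]; decide⟩]
  -- every `c ∈ C` lies in `C₀` or in `v₁ + C₀`
  have hlin : ∀ c ∈ C, x ⬝ᵥ c = a * (tu ⬝ᵥ c) := by
    intro c hc
    rcases hev.dotProduct_eq_zero_or_eq_two c with h | h
    · rw [hx0 c hc h, h, mul_zero]
    · have hcv := hx0 (c - v₁) (C.sub_mem hc hv₁) (by rw [dotProduct_sub, h, htv₁, sub_self])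
      rw [dotProduct_sub, sub_eq_zero] at hcv
      rw [hcv, ha, h]
  have hxa : x - a • tu ∈ C := by
    rw [← SetLike.mem_coe, hsd]
    intro c hc
    rw [z4Inner_eq_dotProduct, sub_dotProduct, smul_dotProduct, smul_eq_mul, hlin c hc, sub_self]
  have htx : tu ⬝ᵥ x = 0 := by
    rw [dotProduct_comm]
    exact hx tu ⟨0, C.zero_mem, by simp [z4Inner_eq_dotProduct], 1, by simp⟩
  refine ⟨x - a • tu, hxa, ?_, a, by simp⟩
  rw [z4Inner_eq_dotProduct, dotProduct_sub, dotProduct_smul, htx, hev.dotProduct_self]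
  simp

end Doubled

theorem eight_dvd_euclWt_add_smul {n : ℕ} {v tu : Fin n → ZMod 4} (hv : 8 ∣ euclWt v)
    (hev : IsEvenVec tu) (h2 : Even (Sset tu 2).card) (hort : tu ⬝ᵥ v = 0) (a : ZMod 4) :
    8 ∣ euclWt (v + a • tu) := by
  have htu : 8 ∣ euclWt tu := by
    rw [hev.euclWt_eq]
    exact mul_dvd_mul_left 4 (even_iff_two_dvd.mp h2)
  rw [← ZMod.natCast_eq_zero_iff] at hv htu ⊢
  rw [euclWt_add_cast, dotProduct_smul, dotProduct_comm, hort, smul_zero, ZMod.val_zero, hv]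
  rcases hev.smul_eq_zero_or_self a with h | h <;> rw [h]
  · simp [euclWt]
  · simpa using htu

theorem stmt0 {n : ℕ} (C : Submodule (ZMod 4) (Fin n → ZMod 4))
    (hC : IsTypeIIZ4 (C : Set (Fin n → ZMod 4)))
    (tu : Fin n → ZMod 4) (hev : IsEvenVec tu) (htu : tu ∉ C)
    (h2 : Even (Sset tu 2).card) :
    IsTypeIIZ4 (doubled (C : Set (Fin n → ZMod 4)) tu) := by
  obtain ⟨hsd, hwt⟩ := hC
  refine ⟨(doubled_subset_z4Dual hsd.subset hev.dotProduct_self).antisymm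
    (z4Dual_doubled_subset hsd hev htu), ?_⟩
  rintro _ ⟨v, hv, hv0, a, rfl⟩
  exact eight_dvd_euclWt_add_smul (hwt v hv) hev h2 hv0 a
end

section
/- Let C be a Type II Z4-code of length n that is a free ZMod 4-module of rank k and is such that the projection of (ZMod 4)^n onto the first k coordinates restricts to a bijection from C onto (ZMod 4)^k (i.e., C has a generator matrix in standard form [I_k A]). Let 2u ∈ (ZMod 4)^n be an even vector with 2u ∉ C and with an even number of coordinates equal to 2. Then there exists an even vector 2u' ∈ (ZMod 4)^n whose coordinates equal to 2 all lie among the positions k+1,…,n, with 2u' ∉ C, with an even number of coordinates equal to 2, and such that {v ∈ C : ⟨2u, v⟩ = 0} + span{2u} = {v ∈ C : ⟨2u', v⟩ = 0} + span{2u'}. -/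
open Finset

lemma z4Inner_add {n : ℕ} (x y z : Fin n → ZMod 4) :
    z4Inner x (y + z) = z4Inner x y + z4Inner x z := by
  simp [z4Inner, mul_add, Finset.sum_add_distrib]

lemma z4Inner_sub {n : ℕ} (x y z : Fin n → ZMod 4) :
    z4Inner x (y - z) = z4Inner x y - z4Inner x z := by
  simp [z4Inner, mul_sub, Finset.sum_sub_distrib]

lemma z4Inner_smul {n : ℕ} (a : ZMod 4) (x y : Fin n → ZMod 4) :
    z4Inner x (a • y) = a * z4Inner x y := by
  simp [z4Inner, Finset.mul_sum, mul_left_comm]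

lemma aux_ind (a b : ZMod 4) (ha : a = 0 ∨ a = 2) (hb : b = 0 ∨ b = 2) :
    (if a - b = 2 then (1:ZMod 2) else 0)
      = (if a = 2 then 1 else 0) + (if b = 2 then 1 else 0) := by
  rcases ha with ha|ha <;> rcases hb with hb|hb <;> subst ha <;> subst hb <;> decide

lemma aux_even_sub (a b : ZMod 4) (ha : a = 0 ∨ a = 2) (hb : b = 0 ∨ b = 2) :
    a - b = 0 ∨ a - b = 2 := by
  rcases ha with ha|ha <;> rcases hb with hb|hb <;> subst ha <;> subst hb <;> decide

lemma two_mul_cases (b : ZMod 4) : 2 * b = 0 ∨ 2 * b = 2 := by revert b; decide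

lemma even_iff_zmod2 (m : ℕ) : Even m ↔ ((m : ZMod 2) = 0) := by
  rw [ZMod.natCast_eq_zero_iff, even_iff_two_dvd]

theorem stmt1 {n k : ℕ} (hkn : k ≤ n)
    (C : Submodule (ZMod 4) (Fin n → ZMod 4))
    (hC : IsTypeIIZ4 (C : Set (Fin n → ZMod 4)))
    (hfree : Module.Free (ZMod 4) C)
    (hrank : Module.finrank (ZMod 4) C = k)
    (hproj : Set.BijOn (fun (x : Fin n → ZMod 4) (j : Fin k) => x (Fin.castLE hkn j))
      (C : Set (Fin n → ZMod 4)) Set.univ)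
    (tu : Fin n → ZMod 4) (hev : IsEvenVec tu) (htu : tu ∉ C)
    (h2 : Even (Sset tu 2).card) :
    ∃ tu' : Fin n → ZMod 4, IsEvenVec tu' ∧
      (∀ i : Fin n, tu' i = 2 → k ≤ (i : ℕ)) ∧
      tu' ∉ C ∧ Even (Sset tu' 2).card ∧
      doubled (C : Set (Fin n → ZMod 4)) tu = doubled (C : Set (Fin n → ZMod 4)) tu' := by
  classical
  obtain ⟨d, hdC, hd⟩ := hproj.2.2
    (Set.mem_univ (fun j : Fin k => if tu (Fin.castLE hkn j) = 2 then 1 else 0))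
  set w : Fin n → ZMod 4 := fun i => 2 * d i with hw_def
  have hwC : w ∈ C := by
    have h := C.smul_mem (2 : ZMod 4) hdC
    have : (2 : ZMod 4) • d = w := funext fun i => by simp [hw_def]
    rwa [this] at h
  have hw_ev : ∀ i, w i = 0 ∨ w i = 2 := fun i => two_mul_cases (d i)
  set tu' : Fin n → ZMod 4 := fun i => tu i - w i with htu'_def
  have htuw : tu = tu' + w := by funext i; simp [htu'_def]
  -- self-duality
  have hself : ∀ v ∈ C, ∀ c ∈ C, z4Inner v c = 0 := by
    intro v hv c hc
    have hv' : v ∈ z4Dual (C : Set (Fin n → ZMod 4)) := hC.1 ▸ hv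
    exact hv' c hc
  have hinner_tu_w : z4Inner tu w = 0 := by
    apply Finset.sum_eq_zero
    intro i _
    rcases hev i with h|h <;>
      rw [h] <;> simp [hw_def, ← mul_assoc, show (2:ZMod 4)*2 = 0 from by decide]
  have hinner_eq : ∀ c ∈ C, z4Inner tu' c = z4Inner tu c := by
    intro c hc
    have h1 : z4Inner w c = 0 := hself w hwC c hc
    have : z4Inner tu' c = z4Inner tu c - z4Inner w c := by
      simp only [z4Inner, htu'_def]
      rw [← Finset.sum_sub_distrib]
      exact Finset.sum_congr rfl fun i _ => by ring
    rw [this, h1, sub_zero]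
  have htu'w : z4Inner tu' w = 0 := by rw [hinner_eq w hwC, hinner_tu_w]
  -- tu' not in C
  have htu'C : tu' ∉ C := by
    intro h
    exact htu (htuw ▸ C.add_mem h hwC)
  -- even vector
  have hev' : IsEvenVec tu' := fun i => aux_even_sub _ _ (hev i) (hw_ev i)
  -- support in last coordinates
  have hsupp : ∀ i : Fin n, tu' i = 2 → k ≤ (i : ℕ) := by
    intro i hi
    by_contra hki
    push_neg at hki
    have hji : Fin.castLE hkn ⟨(i : ℕ), hki⟩ = i := rfl
    have hdij := congrFun hd ⟨(i : ℕ), hki⟩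
    simp only [hji] at hdij
    have hwi : w i = 2 * (if tu i = 2 then 1 else 0) := by rw [hw_def]; simp [hdij]
    rcases hev i with h|h <;> rw [htu'_def] at hi <;> simp only at hi <;>
      rw [h, hwi, h] at hi <;> revert hi <;> decide
  -- parity of Sset w 2
  have hwt : euclWt w = 4 * (Sset w 2).card := by
    unfold euclWt Sset
    rw [Finset.card_filter, Finset.mul_sum]
    refine Finset.sum_congr rfl fun i _ => ?_
    rcases hw_ev i with h|h <;> rw [h] <;> decide
  have h8 : 8 ∣ euclWt w := hC.2 w hwC
  have hw2 : Even (Sset w 2).card := by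
    obtain ⟨t, ht⟩ := h8
    rw [hwt] at ht
    exact ⟨t, by omega⟩
  -- parity of Sset tu' 2
  have h2' : Even (Sset tu' 2).card := by
    rw [even_iff_zmod2]
    have hc : ∀ (x : Fin n → ZMod 4),
        (((Sset x 2).card : ZMod 2)) = ∑ i, if x i = 2 then (1:ZMod 2) else 0 := by
      intro x
      rw [Sset, Finset.card_filter]
      push_cast
      exact Finset.sum_congr rfl fun i _ => by split <;> simp
    rw [hc]
    have : ∀ i, (if tu' i = 2 then (1:ZMod 2) else 0)
        = (if tu i = 2 then 1 else 0) + (if w i = 2 then 1 else 0) := by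
      intro i
      rw [htu'_def]
      exact aux_ind _ _ (hev i) (hw_ev i)
    rw [Finset.sum_congr rfl fun i _ => this i, Finset.sum_add_distrib, ← hc, ← hc]
    rw [even_iff_zmod2] at h2 hw2
    rw [h2, hw2, add_zero]
  refine ⟨tu', hev', hsupp, htu'C, h2', ?_⟩
  -- equality of doubled codes
  ext x
  constructor
  · rintro ⟨v, hv, hiv, a, rfl⟩
    refine ⟨v + a • w, C.add_mem hv (C.smul_mem a hwC), ?_, a, ?_⟩
    · rw [hinner_eq _ (C.add_mem hv (C.smul_mem a hwC)), z4Inner_add, z4Inner_smul,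
        hiv, hinner_tu_w, mul_zero, add_zero]
    · funext i
      simp [htu'_def, smul_eq_mul]
      ring
  · rintro ⟨v, hv, hiv, a, rfl⟩
    refine ⟨v - a • w, C.sub_mem hv (C.smul_mem a hwC), ?_, a, ?_⟩
    · rw [← hinner_eq _ (C.sub_mem hv (C.smul_mem a hwC)), z4Inner_sub, z4Inner_smul,
        hiv, htu'w, mul_zero, sub_zero]
    · funext i
      simp [htu'_def, smul_eq_mul]
      ring
end

section
/- Let n ∈ {48, 56, 64}. Let C be an extremal Type II Z4-code of length n and let 2u ∈ (ZMod 4)^n be an even vector with 2u ∉ C and with an even number of coordinates equal to 2. If there exists a codeword v of C with ⟨2u, v⟩ = 0 satisfying one of the following three conditions: (1) S₂(v) ⊆ S₂(2u) ⊆ S₁(v)∪S₂(v)∪S₃(v) and |S₁(v)∪S₃(v)| = 16; (2) |S₂(2u) \ (S₁(v)∪S₂(v)∪S₃(v))| + |S₂(v) \ S₂(2u)| = 1 and |S₁(v)∪S₃(v)| = 12; (3) |S₂(2u) \ S₂(v)| + |S₂(v) \ S₂(2u)| ∈ {2,4} and |S₁(v)∪S₃(v)| = 0; then the doubled code C̃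 = {w ∈ C : ⟨2u, w⟩ = 0} + span{2u} is not extremal: it contains a nonzero codeword of Euclidean weight at most 16. -/
open Finset

private lemma zmod4_cases : ∀ b : ZMod 4, b = 0 ∨ b = 1 ∨ b = 2 ∨ b = 3 := by decide

private lemma key1 : ∀ a b : ZMod 4, (b = 0 ∨ b = 2) → (a = 2 → b = 2) → (b = 2 → ¬ a = 0) →
    (if a + b = 0 then 0 else if a + b = 2 then 4 else 1) ≤
      (if a = 1 ∨ a = 3 then (1:ℕ) else 0) := by decide

private lemma key2 : ∀ a b : ZMod 4, (b = 0 ∨ b = 2) →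
    (if a + b = 0 then 0 else if a + b = 2 then 4 else 1) ≤
      (if a = 1 ∨ a = 3 then (1:ℕ) else 0) + (if b = 2 ∧ a = 0 then 4 else 0) +
        (if a = 2 ∧ ¬ b = 2 then 4 else 0) := by decide

private lemma key3 : ∀ a b : ZMod 4, (a = 0 ∨ a = 2) → (b = 0 ∨ b = 2) →
    (if a + b = 0 then 0 else if a + b = 2 then 4 else 1) ≤
      (if b = 2 ∧ ¬ a = 2 then (4:ℕ) else 0) + (if a = 2 ∧ ¬ b = 2 then 4 else 0) := by decide

private lemma sum_ind {n : ℕ} (p : Fin n → Prop) [DecidablePred p] (c : ℕ) :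
    (∑ i, if p i then c else 0) = (Finset.univ.filter p).card * c := by
  rw [← Finset.sum_filter, Finset.sum_const, smul_eq_mul]

theorem stmt3 {n : ℕ} (hn : n ∈ ({48, 56, 64} : Set ℕ))
    (C : Submodule (ZMod 4) (Fin n → ZMod 4))
    (hC : IsExtremalTypeIIZ4 n (C : Set (Fin n → ZMod 4)))
    (tu : Fin n → ZMod 4) (hev : IsEvenVec tu) (htu : tu ∉ C)
    (h2 : Even (Sset tu 2).card)
    (v : Fin n → ZMod 4) (hv : v ∈ C) (hvu : z4Inner tu v = 0)
    (hcond :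
      (Sset v 2 ⊆ Sset tu 2 ∧ Sset tu 2 ⊆ Sset v 1 ∪ Sset v 2 ∪ Sset v 3 ∧
        (Sset v 1 ∪ Sset v 3).card = 16) ∨
      ((Sset tu 2 \ (Sset v 1 ∪ Sset v 2 ∪ Sset v 3)).card +
        (Sset v 2 \ Sset tu 2).card = 1 ∧ (Sset v 1 ∪ Sset v 3).card = 12) ∨
      (((Sset tu 2 \ Sset v 2).card + (Sset v 2 \ Sset tu 2).card = 2 ∨
        (Sset tu 2 \ Sset v 2).card + (Sset v 2 \ Sset tu 2).card = 4) ∧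
        (Sset v 1 ∪ Sset v 3).card = 0)) :
    sInf (euclWt '' (doubled (C : Set (Fin n → ZMod 4)) tu \ {0})) ≠ 8 * (n / 24) + 8 ∧
      ∃ w ∈ doubled (C : Set (Fin n → ZMod 4)) tu, w ≠ 0 ∧ euclWt w ≤ 16 := by

  set w : Fin n → ZMod 4 := v + tu with hw
  have hwi : ∀ i, w i = v i + tu i := fun i => rfl
  have hwC : w ∈ doubled (C : Set (Fin n → ZMod 4)) tu := by
    exact ⟨v, hv, hvu, 1, by simp [hw]⟩
  have hwne : w ≠ 0 := by
    intro h0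
    apply htu
    have htu' : tu = -v := by
      have h0' : v + tu = 0 := h0
      rw [add_comm] at h0'
      exact eq_neg_of_add_eq_zero_left h0'
    rw [htu']
    exact C.neg_mem hv
  have hWt : euclWt w ≤ 16 := by
    rcases hcond with ⟨ha, hb, hc⟩ | ⟨ha, hb⟩ | ⟨ha, hb⟩
    · -- Case 1
      have hbound : ∀ i, (if w i = 0 then 0 else if w i = 2 then 4 else 1) ≤
          (if v i = 1 ∨ v i = 3 then (1:ℕ) else 0) := by
        intro i
        have hA : v i = 2 → tu i = 2 := by
          intro h
          have : i ∈ Sset tu 2 := ha (by simp [Sset, h])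
          simpa [Sset] using this
        have hB : tu i = 2 → ¬ v i = 0 := by
          intro h h0
          have : i ∈ Sset v 1 ∪ Sset v 2 ∪ Sset v 3 := hb (by simp [Sset, h])
          simp only [Sset, Finset.mem_union, Finset.mem_filter, Finset.mem_univ, true_and,
            h0] at this
          revert this; decide
        rw [hwi]
        exact key1 (v i) (tu i) (hev i) hA hB
      calc euclWt w ≤ ∑ i, (if v i = 1 ∨ v i = 3 then (1:ℕ) else 0) :=
            Finset.sum_le_sum (fun i _ => hbound i)
        _ = (Finset.univ.filter (fun i => v i = 1 ∨ v i = 3)).card * 1 := sum_ind _ 1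
        _ = (Sset v 1 ∪ Sset v 3).card := by
            rw [mul_one]; congr 1; rw [Sset, Sset, ← Finset.filter_or]
        _ ≤ 16 := by rw [hc]
    · -- Case 2
      have hbound : ∀ i, (if w i = 0 then 0 else if w i = 2 then 4 else 1) ≤
          (if v i = 1 ∨ v i = 3 then (1:ℕ) else 0) + (if tu i = 2 ∧ v i = 0 then 4 else 0) +
            (if v i = 2 ∧ ¬ tu i = 2 then 4 else 0) := by
        intro i
        rw [hwi]
        exact key2 (v i) (tu i) (hev i)
      have e1 : Finset.univ.filter (fun i => tu i = 2 ∧ v i = 0) =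
          Sset tu 2 \ (Sset v 1 ∪ Sset v 2 ∪ Sset v 3) := by
        ext i
        simp only [Sset, Finset.mem_sdiff, Finset.mem_filter, Finset.mem_union,
          Finset.mem_univ, true_and]
        constructor
        · rintro ⟨h1, h0⟩
          refine ⟨h1, ?_⟩
          simp only [h0]
          decide
        · rintro ⟨h1, h0⟩
          refine ⟨h1, ?_⟩
          rcases zmod4_cases (v i) with h | h | h | h <;> simp_all
      have e2 : Finset.univ.filter (fun i => v i = 2 ∧ ¬ tu i = 2) =
          Sset v 2 \ Sset tu 2 := by
        ext i
        simp [Sset, Finset.mem_sdiff, Finset.mem_filter]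
      calc euclWt w ≤ ∑ i, ((if v i = 1 ∨ v i = 3 then (1:ℕ) else 0) +
              (if tu i = 2 ∧ v i = 0 then 4 else 0) + (if v i = 2 ∧ ¬ tu i = 2 then 4 else 0)) :=
            Finset.sum_le_sum (fun i _ => hbound i)
        _ = (Finset.univ.filter (fun i => v i = 1 ∨ v i = 3)).card * 1 +
              (Finset.univ.filter (fun i => tu i = 2 ∧ v i = 0)).card * 4 +
              (Finset.univ.filter (fun i => v i = 2 ∧ ¬ tu i = 2)).card * 4 := by
            rw [Finset.sum_add_distrib, Finset.sum_add_distrib, sum_ind, sum_ind, sum_ind]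
        _ = (Sset v 1 ∪ Sset v 3).card * 1 +
              (Sset tu 2 \ (Sset v 1 ∪ Sset v 2 ∪ Sset v 3)).card * 4 +
              (Sset v 2 \ Sset tu 2).card * 4 := by
            rw [e1, e2]; congr 2; rw [Sset, Sset, ← Finset.filter_or]
        _ ≤ 16 := by omega
    · -- Case 3
      have hveven : ∀ i, v i = 0 ∨ v i = 2 := by
        intro i
        have hempty : Sset v 1 ∪ Sset v 3 = ∅ := Finset.card_eq_zero.mp hb
        have hnot : i ∉ Sset v 1 ∪ Sset v 3 := by rw [hempty]; exact Finset.notMem_empty i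
        simp only [Sset, Finset.mem_union, Finset.mem_filter, Finset.mem_univ, true_and] at hnot
        push_neg at hnot
        rcases zmod4_cases (v i) with h | h | h | h <;> simp_all
      have hbound : ∀ i, (if w i = 0 then 0 else if w i = 2 then 4 else 1) ≤
          (if tu i = 2 ∧ ¬ v i = 2 then (4:ℕ) else 0) + (if v i = 2 ∧ ¬ tu i = 2 then 4 else 0) := by
        intro i
        rw [hwi]
        exact key3 (v i) (tu i) (hveven i) (hev i)
      have e1 : Finset.univ.filter (fun i => tu i = 2 ∧ ¬ v i = 2) = Sset tu 2 \ Sset v 2 := by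
        ext i; simp [Sset, Finset.mem_sdiff, Finset.mem_filter]
      have e2 : Finset.univ.filter (fun i => v i = 2 ∧ ¬ tu i = 2) = Sset v 2 \ Sset tu 2 := by
        ext i; simp [Sset, Finset.mem_sdiff, Finset.mem_filter]
      calc euclWt w ≤ ∑ i, ((if tu i = 2 ∧ ¬ v i = 2 then (4:ℕ) else 0) +
              (if v i = 2 ∧ ¬ tu i = 2 then 4 else 0)) :=
            Finset.sum_le_sum (fun i _ => hbound i)
        _ = (Sset tu 2 \ Sset v 2).card * 4 + (Sset v 2 \ Sset tu 2).card * 4 := by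
            rw [Finset.sum_add_distrib, sum_ind, sum_ind, e1, e2]
        _ ≤ 16 := by omega
  have hmem : euclWt w ∈ euclWt '' (doubled (C : Set (Fin n → ZMod 4)) tu \ {0}) :=
    ⟨w, ⟨hwC, hwne⟩, rfl⟩
  have hle : sInf (euclWt '' (doubled (C : Set (Fin n → ZMod 4)) tu \ {0})) ≤ euclWt w :=
    Nat.sInf_le hmem
  have h24 : 8 * (n / 24) + 8 = 24 := by
    simp only [Set.mem_insert_iff, Set.mem_singleton_iff] at hn
    rcases hn with rfl | rfl | rfl <;> norm_num
  constructor
  · intro heq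
    omega
  · exact ⟨w, hwC, hwne, hWt⟩
end

section
/- Let C be a self-dual Z4-code of length n (C = C^⊥ with respect to the inner product ⟨x,y⟩ = Σᵢ xᵢyᵢ in ZMod 4). Then the lattice A₄(C) is an even unimodular lattice in ℝⁿ if and only if C is a Type II Z4-code, i.e., every codeword of C has Euclidean weight divisible by 8. -/
open Finset

theorem sq_sub_wt' (z : ℤ) : (8:ℤ) ∣ z^2 - (if (z : ZMod 4) = 0 then 0 else if (z : ZMod 4) = 2 then 4 else 1) := by
  have hv : (((((z : ZMod 4)).val : ℤ)) : ZMod 4) = (z : ZMod 4) := by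
    push_cast [ZMod.natCast_val, ZMod.cast_id]; rfl
  have h4 : (4:ℤ) ∣ z - (((z : ZMod 4)).val : ℤ) := by
    have := (ZMod.intCast_zmod_eq_zero_iff_dvd (z - (((z : ZMod 4)).val : ℤ)) 4).mp (by push_cast [hv]; ring)
    exact_mod_cast this
  obtain ⟨k, hk⟩ := h4
  have hc := (by decide : ∀ c : ZMod 4, c = 0 ∨ c = 1 ∨ c = 2 ∨ c = 3) (z : ZMod 4)
  have hz : z = (((z : ZMod 4)).val : ℤ) + 4 * k := by linarith
  rcases hc with h | h | h | h <;> rw [h] at hz ⊢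
  · rw [(by decide : ((0:ZMod 4)).val = 0)] at hz; rw [if_pos rfl]
    exact ⟨2*k^2, by rw [hz]; push_cast; ring⟩
  · rw [(by decide : ((1:ZMod 4)).val = 1)] at hz; rw [if_neg (by decide), if_neg (by decide)]
    exact ⟨2*k^2 + k, by rw [hz]; push_cast; ring⟩
  · rw [(by decide : ((2:ZMod 4)).val = 2)] at hz; rw [if_neg (by decide), if_pos rfl]
    exact ⟨2*k^2 + 2*k, by rw [hz]; push_cast; ring⟩
  · rw [(by decide : ((3:ZMod 4)).val = 3)] at hz; rw [if_neg (by decide), if_neg (by decide)]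
    exact ⟨2*k^2 + 3*k + 1, by rw [hz]; push_cast; ring⟩

theorem sum_sq_sub_wt' {n : ℕ} (z : Fin n → ℤ) :
    (8:ℤ) ∣ (∑ i, (z i)^2) - (euclWt (fun i => (z i : ZMod 4)) : ℤ) := by
  have : ((euclWt (fun i => (z i : ZMod 4)) : ℤ)) =
      ∑ i, (if ((z i : ZMod 4)) = 0 then 0 else if ((z i : ZMod 4)) = 2 then (4:ℤ) else 1) := by
    unfold euclWt; push_cast; rfl
  rw [this, ← Finset.sum_sub_distrib]
  exact Finset.dvd_sum fun i _ => sq_sub_wt' (z i)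

-- inner product relation
theorem four_mul_rInner {n : ℕ} (x y : Fin n → ℝ) (z w : Fin n → ℤ)
    (hx : ∀ i, 2 * x i = (z i : ℝ)) (hy : ∀ i, 2 * y i = (w i : ℝ)) :
    4 * rInner x y = ((∑ i, z i * w i : ℤ) : ℝ) := by
  unfold rInner
  push_cast
  rw [Finset.mul_sum]
  refine Finset.sum_congr rfl fun i _ => ?_
  calc 4 * (x i * y i) = (2 * x i) * (2 * y i) := by ring
    _ = (z i : ℝ) * (w i : ℝ) := by rw [hx i, hy i]


theorem res_lift' {n : ℕ} (c : Fin n → ZMod 4) (i : Fin n) :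
    ((((c i).val : ℤ)) : ZMod 4) = c i := by
  push_cast [ZMod.natCast_val, ZMod.cast_id]; rfl

theorem dvd4_inner {n : ℕ} (C : Submodule (ZMod 4) (Fin n → ZMod 4))
    (hsd : IsSelfDualZ4 (C : Set (Fin n → ZMod 4))) (z w : Fin n → ℤ)
    (hz : (fun i => (z i : ZMod 4)) ∈ C) (hw : (fun i => (w i : ZMod 4)) ∈ C) :
    (4:ℤ) ∣ ∑ i, z i * w i := by
  have h0 : ((∑ i, z i * w i : ℤ) : ZMod 4) = 0 := by
    have hmem : (fun i => (z i : ZMod 4)) ∈ z4Dual (C : Set (Fin n → ZMod 4)) := by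
      rw [← hsd]; exact hz
    have := hmem _ hw
    unfold z4Inner at this
    push_cast
    exact this
  exact_mod_cast (ZMod.intCast_zmod_eq_zero_iff_dvd _ 4).mp h0

theorem stmt8 {n : ℕ} (C : Submodule (ZMod 4) (Fin n → ZMod 4))
    (hsd : IsSelfDualZ4 (C : Set (Fin n → ZMod 4))) :
    (IsEvenLattice (A4lattice (C : Set (Fin n → ZMod 4))) ∧
      IsUnimodularLattice (A4lattice (C : Set (Fin n → ZMod 4)))) ↔
    (∀ c ∈ C, 8 ∣ euclWt c) := by
  set L := A4lattice (C : Set (Fin n → ZMod 4)) with hL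
  have hint : IsIntegralLattice L := by
    rintro x ⟨z, hxz, hzC⟩ y ⟨w, hyw, hwC⟩
    obtain ⟨m, hm⟩ := dvd4_inner C hsd z w hzC hwC
    refine ⟨m, ?_⟩
    have h4 := four_mul_rInner x y z w hxz hyw
    rw [hm] at h4
    push_cast at h4
    linarith
  constructor
  · rintro ⟨⟨_, heven⟩, _⟩ c hc
    have hres : (fun i => ((((c i).val : ℤ)) : ZMod 4)) = c := funext (res_lift' c)
    have hxL : (fun i => ((((c i).val : ℤ)) : ℝ) / 2) ∈ L := by
      exact ⟨fun i => ((c i).val : ℤ), fun i => by ring, by rw [hres]; exact hc⟩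
    obtain ⟨m, hm⟩ := heven _ hxL
    have h4 := four_mul_rInner (fun i => ((((c i).val : ℤ)) : ℝ) / 2)
      (fun i => ((((c i).val : ℤ)) : ℝ) / 2) (fun i => ((c i).val : ℤ)) (fun i => ((c i).val : ℤ))
      (fun i => by ring) (fun i => by ring)
    rw [hm] at h4
    have hsq : (∑ i, (((c i).val : ℤ))^2 : ℤ) = 8 * m := by
      have hcast : ((∑ i, (((c i).val : ℤ)) * (((c i).val : ℤ)) : ℤ) : ℝ) = ((8 * m : ℤ) : ℝ) := by
        push_cast; push_cast at h4; linarith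
      have h2 := Int.cast_injective (α := ℝ) hcast
      rw [← h2]
      exact Finset.sum_congr rfl fun i _ => sq ((((c i).val : ℤ)))
    have hd : (8:ℤ) ∣ (euclWt c : ℤ) := by
      have hsub := sum_sq_sub_wt' (fun i => (((c i).val : ℤ)))
      rw [hres] at hsub
      omega
    exact_mod_cast hd
  · intro hT
    have heven : ∀ x ∈ L, ∃ m : ℤ, rInner x x = 2 * (m : ℝ) := by
      rintro x ⟨z, hxz, hzC⟩
      have hwt := hT _ hzC
      have hsub := sum_sq_sub_wt' z
      have hd : (8:ℤ) ∣ ∑ i, (z i)^2 := by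
        obtain ⟨a, ha⟩ := hwt
        omega
      obtain ⟨m, hm⟩ := hd
      refine ⟨m, ?_⟩
      have h4 := four_mul_rInner x x z z hxz hxz
      have hss : (∑ i, z i * z i : ℤ) = 8 * m := by
        rw [← hm]
        exact Finset.sum_congr rfl fun i _ => (sq (z i)).symm
      rw [hss] at h4
      push_cast at h4
      linarith
    refine ⟨⟨hint, heven⟩, hint, ?_⟩
    ext y
    constructor
    · intro hy x hx
      exact hint x hx y hy
    · intro hy
      have hwex : ∀ i : Fin n, ∃ m : ℤ, 2 * y i = (m : ℝ) := by
        intro i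
        have hxL : (fun j => if j = i then (2:ℝ) else 0) ∈ L := by
          refine ⟨fun j => if j = i then 4 else 0, fun j => by by_cases h : j = i <;> simp [h] <;> norm_num, ?_⟩
          have h0 : (fun j => (((if j = i then (4:ℤ) else 0) : ℤ) : ZMod 4)) = (0 : Fin n → ZMod 4) := by
            funext j
            by_cases h : j = i <;> simp [h] <;> decide
          rw [h0]
          exact C.zero_mem
        obtain ⟨m, hm⟩ := hy _ hxL
        refine ⟨m, ?_⟩
        rw [← hm]
        unfold rInner
        rw [Finset.sum_eq_single i (fun j _ hj => by simp [hj]) (by simp)]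
        simp
      choose w hw using hwex
      refine ⟨w, hw, ?_⟩
      rw [hsd]
      intro c hc
      have hres : (fun i => ((((c i).val : ℤ)) : ZMod 4)) = c := funext (res_lift' c)
      have hxL : (fun i => ((((c i).val : ℤ)) : ℝ) / 2) ∈ L :=
        ⟨fun i => (((c i).val : ℤ)), fun i => by ring, by rw [hres]; exact hc⟩
      obtain ⟨m, hm⟩ := hy _ hxL
      have h4 : ((∑ i, w i * (((c i).val : ℤ)) : ℤ) : ℝ) = ((4 * m : ℤ) : ℝ) := by
        have h5 := four_mul_rInner (fun i => ((((c i).val : ℤ)) : ℝ) / 2) y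
          (fun i => (((c i).val : ℤ))) w (fun i => by ring) hw
        rw [hm] at h5
        push_cast at h5 ⊢
        rw [h5]
        exact Finset.sum_congr rfl fun i _ => mul_comm _ _
      have hint4 : (∑ i, w i * (((c i).val : ℤ)) : ℤ) = 4 * m := Int.cast_injective (α := ℝ) h4
      have h0 : ((∑ i, w i * (((c i).val : ℤ)) : ℤ) : ZMod 4) = 0 := by
        rw [hint4]
        push_cast [show ((4:ZMod 4)) = 0 from by decide]
        ring
      show z4Inner (fun i => (w i : ZMod 4)) c = 0
      unfold z4Inner
      calc ∑ i, (fun i => ((w i : ZMod 4))) i * c i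
          = ((∑ i, w i * (((c i).val : ℤ)) : ℤ) : ZMod 4) := by
            push_cast
            exact Finset.sum_congr rfl fun i _ => by rw [ZMod.natCast_val, ZMod.cast_id]
        _ = 0 := h0
end

section
/- Let C be a self-dual Z4-code of length n. Then the residue code C^(1) is a doubly even binary code (every codeword of C^(1) has Hamming weight divisible by 4), and C^(1) equals the dual code of the torsion code C^(2), i.e., C^(1) = (C^(2))^⊥ in F₂ⁿ. -/
open Finset

/-!
For `c ∈ C` and a binary word `t`, the `ℤ/4` product `⟨c, 2t̂⟩` equals `2` times the binary
product of `c mod 2` with `t`. Hence `C ⊆ C^⊥` gives `C^(2) ⊆ (C^(1))^⊥` and `C^⊥ ⊆ C` the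
converse, so `C^(2) = (C^(1))^⊥` and, by nondegeneracy of the binary dot product,
`C^(1) = (C^(2))^⊥`. Double evenness comes from `⟨c, c⟩ = 0`: modulo 4 an odd square is `1` and
an even square is `0`, so `⟨c, c⟩` is the weight of `c mod 2` reduced modulo 4.
-/

section DotProduct

variable {K ι : Type*} [Fintype ι]

lemma dotProductBilin_isRefl [CommSemiring K] :
    LinearMap.BilinForm.IsRefl (dotProductBilin K K : LinearMap.BilinForm K (ι → K)) :=
  fun x y h => by simpa [dotProduct_comm] using h

lemma dotProductBilin_nondegenerate [CommSemiring K] :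
    (dotProductBilin K K : LinearMap.BilinForm K (ι → K)).Nondegenerate :=
  ⟨fun x hx => dotProduct_eq_zero x hx,
    fun y hy => dotProduct_eq_zero y fun x => dotProduct_comm y x ▸ hy x⟩

end DotProduct

section Z4Codes

variable {n : ℕ}

lemma bInner_eq_dotProduct (x y : Fin n → ZMod 2) : bInner x y = x ⬝ᵥ y := rfl

lemma z4Inner_comm (x y : Fin n → ZMod 4) : z4Inner x y = z4Inner y x := by
  simp only [z4Inner, mul_comm]

lemma bInner_comm (x y : Fin n → ZMod 2) : bInner x y = bInner y x := by
  simp only [bInner, mul_comm]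

lemma bDual_eq_orthogonal (D : Submodule (ZMod 2) (Fin n → ZMod 2)) :
    bDual (D : Set (Fin n → ZMod 2)) =
      LinearMap.BilinForm.orthogonal (dotProductBilin (ZMod 2) (ZMod 2)) D := by
  ext x
  simp [bDual, bInner_eq_dotProduct, LinearMap.BilinForm.mem_orthogonal_iff, dotProduct_comm]

lemma bDual_bDual (D : Submodule (ZMod 2) (Fin n → ZMod 2)) :
    bDual (bDual (D : Set (Fin n → ZMod 2))) = D := by
  rw [bDual_eq_orthogonal, bDual_eq_orthogonal,
    LinearMap.BilinForm.orthogonal_orthogonal dotProductBilin_nondegenerate dotProductBilin_isRefl]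

def reduceMod2 : ZMod 4 →+* ZMod 2 := ZMod.castHom (by norm_num : (2 : ℕ) ∣ 4) (ZMod 2)

/-- Unlike `ZMod.val`, the map `b ↦ 2 b̂` is additive. -/
def twoMulLift : ZMod 2 →+ ZMod 4 where
  toFun b := 2 * (b.val : ZMod 4)
  map_zero' := by decide
  map_add' := by decide

lemma twoMulLift_eq_zero_iff (b : ZMod 2) : twoMulLift b = 0 ↔ b = 0 := by
  revert b; decide

lemma mul_twoMulLift (a : ZMod 4) (b : ZMod 2) :
    a * twoMulLift b = twoMulLift (reduceMod2 a * b) := by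
  revert a b; decide

lemma z4Inner_twoMulLift (c : Fin n → ZMod 4) (t : Fin n → ZMod 2) :
    z4Inner c (fun i => twoMulLift (t i)) = twoMulLift (bInner (fun i => reduceMod2 (c i)) t) := by
  simp only [z4Inner, bInner, map_sum, mul_twoMulLift]

lemma natCast_hWt_reduceMod2 (c : Fin n → ZMod 4) :
    (hWt (fun i => reduceMod2 (c i)) : ZMod 4) = z4Inner c c := by
  have hsq : ∀ a : ZMod 4, (if reduceMod2 a ≠ 0 then (1 : ZMod 4) else 0) = a * a := by decide
  rw [hWt, ← Finset.sum_boole, z4Inner]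
  exact Finset.sum_congr rfl fun i _ => hsq (c i)

lemma four_dvd_hWt_reduceMod2 {c : Fin n → ZMod 4} (hc : z4Inner c c = 0) :
    4 ∣ hWt (fun i => reduceMod2 (c i)) :=
  (ZMod.natCast_eq_zero_iff _ 4).mp (by rw [natCast_hWt_reduceMod2, hc])

def residueCode (C : Submodule (ZMod 4) (Fin n → ZMod 4)) :
    Submodule (ZMod 2) (Fin n → ZMod 2) :=
  AddSubgroup.toZModSubmodule 2
    (C.toAddSubgroup.map (reduceMod2.toAddMonoidHom.compLeft (Fin n)))

lemma coe_residueCode (C : Submodule (ZMod 4) (Fin n → ZMod 4)) :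
    (residueCode C : Set (Fin n → ZMod 2)) = residueSet (C : Set (Fin n → ZMod 4)) := by
  ext y
  exact ⟨fun ⟨c, hc, h⟩ => ⟨c, hc, h.symm⟩, fun ⟨c, hc, h⟩ => ⟨c, hc, h.symm⟩⟩

lemma twoMulLift_mem_z4Dual_iff (C : Set (Fin n → ZMod 4)) (t : Fin n → ZMod 2) :
    (fun i => twoMulLift (t i)) ∈ z4Dual C ↔ t ∈ bDual (residueSet C) := by
  constructor
  · rintro h _ ⟨c, hc, rfl⟩
    have hct := h c hc
    rwa [z4Inner_comm, z4Inner_twoMulLift, twoMulLift_eq_zero_iff, bInner_comm] at hct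
  · intro h c hc
    rw [z4Inner_comm, z4Inner_twoMulLift, twoMulLift_eq_zero_iff, bInner_comm]
    exact h _ ⟨c, hc, rfl⟩

lemma torsionSet_eq_bDual_residueSet {C : Set (Fin n → ZMod 4)} (hsd : IsSelfDualZ4 C) :
    torsionSet C = bDual (residueSet C) :=
  Set.ext fun t => (Set.ext_iff.mp hsd _).trans (twoMulLift_mem_z4Dual_iff C t)

end Z4Codes

theorem stmt9 {n : ℕ} (C : Submodule (ZMod 4) (Fin n → ZMod 4))
    (hsd : IsSelfDualZ4 (C : Set (Fin n → ZMod 4))) :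
    (∀ y ∈ residueSet (C : Set (Fin n → ZMod 4)), 4 ∣ hWt y) ∧
      residueSet (C : Set (Fin n → ZMod 4)) = bDual (torsionSet (C : Set (Fin n → ZMod 4))) := by
  refine ⟨?_, ?_⟩
  · rintro _ ⟨c, hc, rfl⟩
    exact four_dvd_hWt_reduceMod2 (hsd.subset hc c hc)
  · rw [torsionSet_eq_bDual_residueSet hsd, ← coe_residueCode, bDual_bDual]
end
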